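/- Fix h with 0 < h < 2π/3 and knots x_j = x_0 + j*h, and let T be the trigonometric cubic B-spline centered at the knot x_i. Then T is differentiable at the knots x_{i-1}, x_i, x_{i+1} with T'(x_{i-1}) = (3/4) / sin(3h/2), T'(x_i) = 0 and T'(x_{i+1}) = -(3/4) / sin(3h/2). -/

import Mathlib

open scoped Classical

/-- Knot `x_j = x₀ + j h` of a uniform partition. -/
noncomputable def knot (x₀ h : ℝ) (j : ℤ) : ℝ := x₀ + j * h

/-- The trigonometric cubic B-spline centered at the knot `x_i`, defined piecewise
using `Z(y) = sin((x - y)/2)`, `Ẑ(y) = sin((y - x)/2)` and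
`Z_h = sin(h/2) sin(h) sin(3h/2)`. -/
noncomputable def trigBSpline (x₀ h : ℝ) (i : ℤ) (x : ℝ) : ℝ :=
  let xk : ℤ → ℝ := fun j => knot x₀ h j
  let Z : ℝ → ℝ := fun y => Real.sin ((x - y) / 2)
  let Zc : ℝ → ℝ := fun y => Real.sin ((y - x) / 2)
  let Zh : ℝ := Real.sin (h / 2) * Real.sin h * Real.sin (3 * h / 2)
  (1 / Zh) *
    (if x ∈ Set.Icc (xk (i - 2)) (xk (i - 1)) then (Z (xk (i - 2))) ^ 3
     else if x ∈ Set.Icc (xk (i - 1)) (xk i) then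
       Z (xk (i - 2)) * (Z (xk (i - 2)) * Zc (xk i) + Zc (xk (i + 1)) * Z (xk (i - 1)))
         + Zc (xk (i + 2)) * (Z (xk (i - 1))) ^ 2
     else if x ∈ Set.Icc (xk i) (xk (i + 1)) then
       Z (xk (i - 2)) * (Zc (xk (i + 1))) ^ 2
         + Zc (xk (i + 2))
           * (Z (xk (i - 1)) * Zc (xk (i + 1)) + Zc (xk (i + 2)) * Z (xk i))
     else if x ∈ Set.Icc (xk (i + 1)) (xk (i + 2)) then (Zc (xk (i + 2))) ^ 3
     else 0)

private lemma hasDerivAt_S (c x : ℝ) :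
    HasDerivAt (fun y : ℝ => Real.sin ((y - c) / 2)) (Real.cos ((x - c) / 2) * (1 / 2)) x := by
  have h1 : HasDerivAt (fun y : ℝ => (y - c) / 2) (1 / 2) x :=
    (((hasDerivAt_id x).sub_const c).div_const 2)
  simpa [Function.comp_def] using (Real.hasDerivAt_sin ((x - c) / 2)).comp x h1

private lemma hasDerivAt_Sc (c x : ℝ) :
    HasDerivAt (fun y : ℝ => Real.sin ((c - y) / 2)) (Real.cos ((c - x) / 2) * (-1 / 2)) x := by
  have h1 : HasDerivAt (fun y : ℝ => (c - y) / 2) (-1 / 2) x := by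
    simpa using (((hasDerivAt_id x).const_sub c).div_const 2)
  simpa [Function.comp_def] using (Real.hasDerivAt_sin ((c - x) / 2)).comp x h1

private lemma glue {f g₁ g₂ : ℝ → ℝ} {d p q r : ℝ} (hpq : p < q) (hqr : q < r)
    (h1 : ∀ y ∈ Set.Icc p q, f y = g₁ y) (h2 : ∀ y ∈ Set.Icc q r, f y = g₂ y)
    (H1 : HasDerivAt g₁ d q) (H2 : HasDerivAt g₂ d q) : HasDerivAt f d q := by
  have A : HasDerivWithinAt f d (Set.Icc p q) q :=
    (H1.hasDerivWithinAt).congr h1 (h1 q ⟨hpq.le, le_refl q⟩)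
  have B : HasDerivWithinAt f d (Set.Icc q r) q :=
    (H2.hasDerivWithinAt).congr h2 (h2 q ⟨le_refl q, hqr.le⟩)
  have U := A.union B
  rw [Set.Icc_union_Icc_eq_Icc hpq.le hqr.le] at U
  exact U.hasDerivAt (Icc_mem_nhds hpq hqr)

/-- piece on `[x_{i-2}, x_{i-1}]` -/
noncomputable def gp1 (h a : ℝ) : ℝ → ℝ := fun y =>
  (1 / (Real.sin (h / 2) * Real.sin h * Real.sin (3 * h / 2))) *
    (Real.sin ((y - (a - 2 * h)) / 2)) ^ 3

/-- piece on `[x_{i-1}, x_i]` -/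
noncomputable def gp2 (h a : ℝ) : ℝ → ℝ := fun y =>
  (1 / (Real.sin (h / 2) * Real.sin h * Real.sin (3 * h / 2))) *
    (Real.sin ((y - (a - 2 * h)) / 2) *
        (Real.sin ((y - (a - 2 * h)) / 2) * Real.sin ((a - y) / 2)
          + Real.sin ((a + h - y) / 2) * Real.sin ((y - (a - h)) / 2))
      + Real.sin ((a + 2 * h - y) / 2) * (Real.sin ((y - (a - h)) / 2)) ^ 2)

/-- piece on `[x_i, x_{i+1}]` -/
noncomputable def gp3 (h a : ℝ) : ℝ → ℝ := fun y =>
  (1 / (Real.sin (h / 2) * Real.sin h * Real.sin (3 * h / 2))) *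
    (Real.sin ((y - (a - 2 * h)) / 2) * (Real.sin ((a + h - y) / 2)) ^ 2
      + Real.sin ((a + 2 * h - y) / 2) *
        (Real.sin ((y - (a - h)) / 2) * Real.sin ((a + h - y) / 2)
          + Real.sin ((a + 2 * h - y) / 2) * Real.sin ((y - a) / 2)))

/-- piece on `[x_{i+1}, x_{i+2}]` -/
noncomputable def gp4 (h a : ℝ) : ℝ → ℝ := fun y =>
  (1 / (Real.sin (h / 2) * Real.sin h * Real.sin (3 * h / 2))) *
    (Real.sin ((a + 2 * h - y) / 2)) ^ 3

/-- First-derivative values of the trigonometric cubic B-spline at the knots. -/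
theorem stmt_13 (x₀ h : ℝ) (hh0 : 0 < h) (hh1 : h < 2 * Real.pi / 3) (i : ℤ) :
    HasDerivAt (trigBSpline x₀ h i) ((3 / 4) / Real.sin (3 * h / 2)) (knot x₀ h (i - 1))
      ∧ HasDerivAt (trigBSpline x₀ h i) 0 (knot x₀ h i)
      ∧ HasDerivAt (trigBSpline x₀ h i) (-(3 / 4) / Real.sin (3 * h / 2))
          (knot x₀ h (i + 1)) := by
  have hpi := Real.pi_pos
  set a : ℝ := x₀ + (i : ℝ) * h with ha
  have k2 : knot x₀ h (i - 2) = a - 2 * h := by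
    simp only [knot, ha]; push_cast; ring
  have k1 : knot x₀ h (i - 1) = a - h := by
    simp only [knot, ha]; push_cast; ring
  have k0 : knot x₀ h i = a := by simp only [knot, ha]
  have kp1 : knot x₀ h (i + 1) = a + h := by
    simp only [knot, ha]; push_cast; ring
  have kp2 : knot x₀ h (i + 2) = a + 2 * h := by
    simp only [knot, ha]; push_cast; ring
  have hs : 0 < Real.sin (h / 2) :=
    Real.sin_pos_of_pos_of_lt_pi (by linarith) (by linarith)
  have hc : 0 < Real.cos (h / 2) :=
    Real.cos_pos_of_mem_Ioo ⟨by linarith, by linarith⟩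
  have hsh : 0 < Real.sin h :=
    Real.sin_pos_of_pos_of_lt_pi hh0 (by linarith)
  have hs3 : 0 < Real.sin (3 * h / 2) :=
    Real.sin_pos_of_pos_of_lt_pi (by linarith) (by linarith)
  have hsin : Real.sin h = 2 * Real.sin (h / 2) * Real.cos (h / 2) := by
    have := Real.sin_two_mul (h / 2)
    rwa [show 2 * (h / 2) = h by ring] at this
  -- the four pieces agree with the spline on the closed subintervals
  have E1 : ∀ y ∈ Set.Icc (a - 2 * h) (a - h), trigBSpline x₀ h i y = gp1 h a y := by
    intro y hy
    simp only [trigBSpline, k2, k1, k0, kp1, kp2, gp1]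
    rw [if_pos hy]
  have E2 : ∀ y ∈ Set.Icc (a - h) a, trigBSpline x₀ h i y = gp2 h a y := by
    intro y hy
    simp only [trigBSpline, k2, k1, k0, kp1, kp2, gp2]
    rcases eq_or_lt_of_le hy.1 with hE | hlt
    · subst hE
      rw [if_pos (show a - h ∈ Set.Icc (a - 2 * h) (a - h) from ⟨by linarith, le_rfl⟩)]
      simp only [show (a - h - (a - 2 * h)) / 2 = h / 2 by ring,
        show (a - (a - h)) / 2 = h / 2 by ring,
        show (a + h - (a - h)) / 2 = h by ring,
        show (a - h - (a - h)) / 2 = (0 : ℝ) by ring,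
        show (a + 2 * h - (a - h)) / 2 = 3 * h / 2 by ring, Real.sin_zero]
      ring
    · have hn1 : y ∉ Set.Icc (a - 2 * h) (a - h) := by
        rw [Set.mem_Icc]; push_neg; intro _; linarith
      rw [if_neg hn1, if_pos hy]
  have E3 : ∀ y ∈ Set.Icc a (a + h), trigBSpline x₀ h i y = gp3 h a y := by
    intro y hy
    simp only [trigBSpline, k2, k1, k0, kp1, kp2, gp3]
    have hn1 : y ∉ Set.Icc (a - 2 * h) (a - h) := by
      rw [Set.mem_Icc]; push_neg; intro _; linarith [hy.1]
    rcases eq_or_lt_of_le hy.1 with hE | hlt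
    · subst hE
      rw [if_neg hn1, if_pos (show a ∈ Set.Icc (a - h) a from ⟨by linarith, le_rfl⟩)]
      simp only [show (a - (a - 2 * h)) / 2 = h by ring,
        show (a - a) / 2 = (0 : ℝ) by ring,
        show (a + h - a) / 2 = h / 2 by ring,
        show (a - (a - h)) / 2 = h / 2 by ring,
        show (a + 2 * h - a) / 2 = h by ring, Real.sin_zero]
      ring
    · have hn2 : y ∉ Set.Icc (a - h) a := by
        rw [Set.mem_Icc]; push_neg; intro _; linarith
      rw [if_neg hn1, if_neg hn2, if_pos hy]
  have E4 : ∀ y ∈ Set.Icc (a + h) (a + 2 * h), trigBSpline x₀ h i y = gp4 h a y := by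
    intro y hy
    simp only [trigBSpline, k2, k1, k0, kp1, kp2, gp4]
    have hn1 : y ∉ Set.Icc (a - 2 * h) (a - h) := by
      rw [Set.mem_Icc]; push_neg; intro _; linarith [hy.1]
    have hn2 : y ∉ Set.Icc (a - h) a := by
      rw [Set.mem_Icc]; push_neg; intro _; linarith [hy.1]
    rcases eq_or_lt_of_le hy.1 with hE | hlt
    · subst hE
      rw [if_neg hn1, if_neg hn2,
        if_pos (show a + h ∈ Set.Icc a (a + h) from ⟨by linarith, le_rfl⟩)]
      simp only [show (a + h - (a - 2 * h)) / 2 = 3 * h / 2 by ring,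
        show (a + h - (a + h)) / 2 = (0 : ℝ) by ring,
        show (a + 2 * h - (a + h)) / 2 = h / 2 by ring,
        show (a + h - (a - h)) / 2 = h by ring,
        show (a + h - a) / 2 = h / 2 by ring, Real.sin_zero]
      ring
    · have hn3 : y ∉ Set.Icc a (a + h) := by
        rw [Set.mem_Icc]; push_neg; intro _; linarith
      rw [if_neg hn1, if_neg hn2, if_neg hn3, if_pos hy]
  -- derivatives of the pieces at the knots
  have D1 : HasDerivAt (gp1 h a) (3 / 4 / Real.sin (3 * h / 2)) (a - h) := by
    have T := ((hasDerivAt_S (a - 2 * h) (a - h)).pow 3).const_mul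
      (1 / (Real.sin (h / 2) * Real.sin h * Real.sin (3 * h / 2)))
    refine T.congr_deriv (Eq.symm ?_)
    simp only [show (a - h - (a - 2 * h)) / 2 = h / 2 by ring]
    norm_num
    rw [hsin]
    field_simp
    ring
  have D2 : HasDerivAt (gp2 h a) (3 / 4 / Real.sin (3 * h / 2)) (a - h) := by
    have hA := hasDerivAt_S (a - 2 * h) (a - h)
    have hB := hasDerivAt_Sc a (a - h)
    have hD := hasDerivAt_Sc (a + h) (a - h)
    have hE := hasDerivAt_S (a - h) (a - h)
    have hF := hasDerivAt_Sc (a + 2 * h) (a - h)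
    have T := ((hA.mul ((hA.mul hB).add (hD.mul hE))).add (hF.mul (hE.pow 2))).const_mul
      (1 / (Real.sin (h / 2) * Real.sin h * Real.sin (3 * h / 2)))
    refine T.congr_deriv (Eq.symm ?_)
    simp only [show (a - h - (a - 2 * h)) / 2 = h / 2 by ring,
      show (a - (a - h)) / 2 = h / 2 by ring,
      show (a + h - (a - h)) / 2 = h by ring,
      show (a - h - (a - h)) / 2 = (0 : ℝ) by ring,
      show (a + 2 * h - (a - h)) / 2 = 3 * h / 2 by ring,
      Real.sin_zero, Real.cos_zero]
    norm_num
    rw [hsin]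
    field_simp
    ring
  have D3 : HasDerivAt (gp2 h a) 0 a := by
    have hA := hasDerivAt_S (a - 2 * h) a
    have hB := hasDerivAt_Sc a a
    have hD := hasDerivAt_Sc (a + h) a
    have hE := hasDerivAt_S (a - h) a
    have hF := hasDerivAt_Sc (a + 2 * h) a
    have T := ((hA.mul ((hA.mul hB).add (hD.mul hE))).add (hF.mul (hE.pow 2))).const_mul
      (1 / (Real.sin (h / 2) * Real.sin h * Real.sin (3 * h / 2)))
    refine T.congr_deriv (Eq.symm ?_)
    simp only [show (a - (a - 2 * h)) / 2 = h by ring,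
      show (a - a) / 2 = (0 : ℝ) by ring,
      show (a + h - a) / 2 = h / 2 by ring,
      show (a - (a - h)) / 2 = h / 2 by ring,
      show (a + 2 * h - a) / 2 = h by ring,
      Real.sin_zero, Real.cos_zero, Pi.mul_apply, Pi.add_apply, Pi.pow_apply]
    push_cast
    rw [hsin]
    ring
  have D4 : HasDerivAt (gp3 h a) 0 a := by
    have hA := hasDerivAt_S (a - 2 * h) a
    have hD := hasDerivAt_Sc (a + h) a
    have hE := hasDerivAt_S (a - h) a
    have hF := hasDerivAt_Sc (a + 2 * h) a
    have hG := hasDerivAt_S a a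
    have T := ((hA.mul (hD.pow 2)).add (hF.mul ((hE.mul hD).add (hF.mul hG)))).const_mul
      (1 / (Real.sin (h / 2) * Real.sin h * Real.sin (3 * h / 2)))
    refine T.congr_deriv (Eq.symm ?_)
    simp only [show (a - (a - 2 * h)) / 2 = h by ring,
      show (a - a) / 2 = (0 : ℝ) by ring,
      show (a + h - a) / 2 = h / 2 by ring,
      show (a - (a - h)) / 2 = h / 2 by ring,
      show (a + 2 * h - a) / 2 = h by ring,
      Real.sin_zero, Real.cos_zero, Pi.mul_apply, Pi.add_apply, Pi.pow_apply]
    push_cast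
    rw [hsin]
    ring
  have D5 : HasDerivAt (gp3 h a) (-(3 / 4) / Real.sin (3 * h / 2)) (a + h) := by
    have hA := hasDerivAt_S (a - 2 * h) (a + h)
    have hD := hasDerivAt_Sc (a + h) (a + h)
    have hE := hasDerivAt_S (a - h) (a + h)
    have hF := hasDerivAt_Sc (a + 2 * h) (a + h)
    have hG := hasDerivAt_S a (a + h)
    have T := ((hA.mul (hD.pow 2)).add (hF.mul ((hE.mul hD).add (hF.mul hG)))).const_mul
      (1 / (Real.sin (h / 2) * Real.sin h * Real.sin (3 * h / 2)))
    refine T.congr_deriv (Eq.symm ?_)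
    simp only [show (a + h - (a - 2 * h)) / 2 = 3 * h / 2 by ring,
      show (a + h - (a + h)) / 2 = (0 : ℝ) by ring,
      show (a + 2 * h - (a + h)) / 2 = h / 2 by ring,
      show (a + h - (a - h)) / 2 = h by ring,
      show (a + h - a) / 2 = h / 2 by ring,
      Real.sin_zero, Real.cos_zero]
    norm_num
    rw [hsin]
    field_simp
    ring
  have D6 : HasDerivAt (gp4 h a) (-(3 / 4) / Real.sin (3 * h / 2)) (a + h) := by
    have T := ((hasDerivAt_Sc (a + 2 * h) (a + h)).pow 3).const_mul
      (1 / (Real.sin (h / 2) * Real.sin h * Real.sin (3 * h / 2)))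
    refine T.congr_deriv (Eq.symm ?_)
    simp only [show (a + 2 * h - (a + h)) / 2 = h / 2 by ring]
    norm_num
    rw [hsin]
    field_simp
    ring
  refine ⟨?_, ?_, ?_⟩
  · rw [k1]
    exact glue (by linarith) (by linarith) E1 E2 D1 D2
  · rw [k0]
    exact glue (by linarith) (by linarith) E2 E3 D3 D4
  · rw [kp1]
    exact glue (by linarith) (by linarith) E3 E4 D5 D6
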